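/- For each point p ∈ P, if for every nonempty cone C (among six cones of angle π/3 with apex p covering the plane) containing a point of S the graph Υ₆(P,S) includes an edge from p to some nearest point of S in C ∩ S, then: for every s ∈ S there exists s' ∈ S with (p,s') an edge of Υ₆(P,S) and |s s'| ≤ |p s|. -/

import Mathlib

/-- The point of the Euclidean plane with coordinates `(x, y)`. -/
noncomputable def pt (x y : ℝ) : EuclideanSpace ℝ (Fin 2) :=
  (WithLp.equiv 2 (Fin 2 → ℝ)).symm ![x, y]

/-- The unit direction of the `k`-th of six cones. -/
noncomputable def dir (k : Fin 6) : EuclideanSpace ℝ (Fin 2) :=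
  pt (Real.cos (k * Real.pi / 3)) (Real.sin (k * Real.pi / 3))

/-- Membership of `q` in the `k`-th cone of angular width `π/3` with apex `p`. -/
def inCone (p : EuclideanSpace ℝ (Fin 2)) (k : Fin 6)
    (q : EuclideanSpace ℝ (Fin 2)) : Prop :=
  InnerProductGeometry.angle (q - p) (dir k) ≤ Real.pi / 6

/-! The six cones at `p` cover the plane, so `s` lies in some cone, whose Yao neighbour `s'`
satisfies `|p s'| ≤ |p s|`. Both `s - p` and `s' - p` are within `π/6` of the cone's axis, so the
angle between them is at most `π/3`, and the law of cosines gives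
`|s s'|² ≤ |p s|² + |p s'|² - |p s| |p s'| ≤ |p s|²`. -/

open Real InnerProductGeometry

theorem norm_sub_le_of_angle_le_pi_div_three {V : Type*} [NormedAddCommGroup V]
    [InnerProductSpace ℝ V] {x y : V} (hxy : angle x y ≤ π / 3) (hy : ‖y‖ ≤ ‖x‖) :
    ‖x - y‖ ≤ ‖x‖ := by
  have hcos : 1 / 2 ≤ cos (angle x y) := by
    rw [← cos_pi_div_three]
    exact cos_le_cos_of_nonneg_of_le_pi (angle_nonneg x y) (by linarith [pi_pos]) hxy
  have hlaw := norm_sub_sq_eq_norm_sq_add_norm_sq_sub_two_mul_norm_mul_norm_mul_cos_angle x y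
  rw [← sq_le_sq₀ (norm_nonneg _) (norm_nonneg _)]
  nlinarith [mul_nonneg (norm_nonneg x) (norm_nonneg y), norm_nonneg y]

theorem exists_abs_toIocMod_sub_le_pi_div_six (θ : ℝ) :
    ∃ k : Fin 6, |toIocMod two_pi_pos (-π) (θ - k * π / 3)| ≤ π / 6 := by
  set m : ℤ := round (θ * 3 / π)
  have hm : |θ - m * π / 3| ≤ π / 6 := by
    have h := abs_sub_round (θ * 3 / π)
    have : θ - m * π / 3 = (θ * 3 / π - m) * (π / 3) := by field_simp
    rw [this, abs_mul, abs_of_pos (by positivity : 0 < π / 3)]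
    nlinarith [pi_pos]
  obtain ⟨k, hk⟩ : ∃ k : ℕ, m % 6 = k :=
    Int.eq_ofNat_of_zero_le (Int.emod_nonneg m (by norm_num : (6 : ℤ) ≠ 0))
  refine ⟨⟨k, by omega⟩, ?_⟩
  have hshift : θ - (k : ℝ) * π / 3 = θ - m * π / 3 + (m / 6 : ℤ) • (2 * π) := by
    have : (m : ℝ) = k + 6 * (m / 6 : ℤ) := by exact_mod_cast (by omega : m = k + 6 * (m / 6))
    rw [zsmul_eq_mul, this]; ring
  rw [Fin.val_mk, hshift, toIocMod_add_zsmul, (toIocMod_eq_self _).2]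
  · exact hm
  · constructor <;> linarith [abs_le.1 hm, pi_pos]

theorem pt_cos_sin_eq_repr_exp (θ : ℝ) :
    pt (cos θ) (sin θ) = Complex.orthonormalBasisOneI.repr (Complex.exp (θ * Complex.I)) := by
  ext i; fin_cases i <;> simp [pt, Complex.exp_ofReal_mul_I_re, Complex.exp_ofReal_mul_I_im]

theorem exists_inCone (p : EuclideanSpace ℝ (Fin 2)) {q : EuclideanSpace ℝ (Fin 2)}
    (hq : q ≠ p) : ∃ k, inCone p k q := by
  set e := Complex.orthonormalBasisOneI.repr
  set z := e.symm (q - p)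
  have hz : z ≠ 0 := by simpa [z, sub_eq_zero] using hq
  obtain ⟨k, hk⟩ := exists_abs_toIocMod_sub_le_pi_div_six z.arg
  refine ⟨k, ?_⟩
  have hpolar : (‖z‖ : ℝ) • Complex.exp (z.arg * Complex.I) = z := by
    rw [Complex.real_smul, Complex.norm_mul_exp_arg_mul_I]
  have hangle : angle (q - p) (dir k) = angle z (Complex.exp ((k * π / 3 : ℝ) * Complex.I)) := by
    rw [dir, pt_cos_sin_eq_repr_exp, ← e.apply_symm_apply (q - p)]
    exact e.toLinearIsometry.angle_map _ _
  rwa [inCone, hangle, ← hpolar, angle_smul_left_of_pos _ _ (norm_pos_iff.2 hz),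
    Complex.angle_exp_exp]

theorem angle_le_pi_div_three_of_inCone {p q r : EuclideanSpace ℝ (Fin 2)} {k : Fin 6}
    (hq : inCone p k q) (hr : inCone p k r) : angle (q - p) (r - p) ≤ π / 3 := by
  have := angle_le_angle_add_angle (q - p) (dir k) (r - p)
  rw [angle_comm (dir k)] at this
  unfold inCone at hq hr
  linarith

theorem yao_neighbor_close_general
    (P S : Finset (EuclideanSpace ℝ (Fin 2))) (hdisj : Disjoint P S)
    (E : EuclideanSpace ℝ (Fin 2) → EuclideanSpace ℝ (Fin 2) → Prop)
    (hYao : ∀ p ∈ P, ∀ k : Fin 6, (∃ s ∈ S, inCone p k s) →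
      ∃ s' ∈ S, inCone p k s' ∧ E p s' ∧ ∀ t ∈ S, inCone p k t → dist p s' ≤ dist p t) :
    ∀ p ∈ P, ∀ s ∈ S, ∃ s' ∈ S, E p s' ∧ dist s s' ≤ dist p s := by
  intro p hp s hs
  have hsp : s ≠ p := by
    rintro rfl
    exact Finset.disjoint_left.mp hdisj hp hs
  obtain ⟨k, hk⟩ := exists_inCone p hsp
  obtain ⟨s', hs', hk', hE, hnearest⟩ := hYao p hp k ⟨s, hs, hk⟩
  refine ⟨s', hs', hE, ?_⟩
  have hcloser : ‖s' - p‖ ≤ ‖s - p‖ := by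
    simpa only [dist_eq_norm'] using hnearest s hs hk
  have hclose :=
    norm_sub_le_of_angle_le_pi_div_three (angle_le_pi_div_three_of_inCone hk hk') hcloser
  rwa [sub_sub_sub_cancel_right, ← dist_eq_norm, ← dist_eq_norm'] at hclose

/-- Let `E` be the edge relation of the Yao-type graph `Υ₆(P,S)`: for each
`p ∈ P` and each of the six `π/3`-cones at `p` that contains a point of `S`, there is an
edge from `p` to a nearest point of `S` in that cone. Then for every `p ∈ P` and `s ∈ S`
there is an `s' ∈ S` with `E p s'` and `dist s s' ≤ dist p s`. -/
theorem yao_neighbor_close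
    (P S : Finset (EuclideanSpace ℝ (Fin 2))) (hdisj : Disjoint P S) (hS : S.Nonempty)
    (E : EuclideanSpace ℝ (Fin 2) → EuclideanSpace ℝ (Fin 2) → Prop)
    (hYao : ∀ p ∈ P, ∀ k : Fin 6, (∃ s ∈ S, inCone p k s) →
      ∃ s' ∈ S, inCone p k s' ∧ E p s' ∧ ∀ t ∈ S, inCone p k t → dist p s' ≤ dist p t) :
    ∀ p ∈ P, ∀ s ∈ S, ∃ s' ∈ S, E p s' ∧ dist s s' ≤ dist p s :=
  yao_neighbor_close_general P S hdisj E hYao
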